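/- arXiv:0903.3438 — 4 statements merged into one kernel-verified Lean document; each statement's English description precedes it below -/
import Mathlib

section
/- Reduction of the limit control problem to a finite-dimensional problem: let a_1,…,a_σ > 0 with a_1+…+a_σ = 1, A_0 = 0, A_i = a_1+…+a_i, let r̃(t) = log(s_i − 1) for A_{i−1} ≤ t < A_i, and let c ∈ (0,1). Then the supremum, over all measurable functions θ : [0,1] → [0,1] with ∫_0^1 θ(t) dt ≤ c, of ∫_0^1 [ r̃(t)θ(t) + H(θ(t)) ] dt equals the supremum of ∑_{i=1}^σ a_i ( θ_i log(s_i − 1) + H(θ_i) ) over all vectors (θ_1,…,θ_σ) ∈ [0,1]^σ with ∑_{i=1}^σ a_i θ_i ≤ c. -/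
open Finset

/-- The entropy function `H(θ) = -θ log θ - (1-θ) log(1-θ)`; with Mathlib's
convention `Real.log 0 = 0` this satisfies `H 0 = H 1 = 0`. -/
noncomputable def Hent (θ : ℝ) : ℝ := -θ * Real.log θ - (1 - θ) * Real.log (1 - θ)

/-!
Cut `[0, 1]` into the intervals `[A_{i-1}, A_i)` on which `r̃` is constant. Replacing a control
`θ` by its averages `θ_i` over these intervals leaves `∫ θ` unchanged and, by Jensen's inequality
for the concave integrand `x ↦ x log (s_i - 1) + H x`, does not decrease the objective.
Conversely, a vector `(θ_i)` is realised by the step function equal to `θ_i` on the `i`-th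
interval. So each value of either problem is dominated by a value of the other, which forces
equal suprema in `ℝ` even when the sets are empty or unbounded.
-/

theorem Hent_eq_binEntropy : Hent = Real.binEntropy := by
  ext p
  simp only [Hent, Real.binEntropy, Real.log_inv]
  ring

theorem continuous_Hent : Continuous Hent :=
  Hent_eq_binEntropy ▸ Real.binEntropy_continuous

theorem concaveOn_Hent : ConcaveOn ℝ (Set.Icc 0 1) Hent :=
  Hent_eq_binEntropy ▸ Real.strictConcave_binEntropy.concaveOn

section

open Set MeasureTheory Function

theorem ConcaveOn.mul_const_add {s : Set ℝ} {F : ℝ → ℝ} (hF : ConcaveOn ℝ s F) (hs : Convex ℝ s)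
    (L : ℝ) : ConcaveOn ℝ s (fun x => x * L + F x) :=
  ((LinearMap.id.smulRight L).concaveOn hs).add hF

theorem ConcaveOn.setIntegral_comp_le {α : Type*} [MeasurableSpace α] {μ : Measure α}
    {s : Set α} {K : Set ℝ} {G : ℝ → ℝ} {f : α → ℝ} (hG : ConcaveOn ℝ K G) (hGc : ContinuousOn G K)
    (hK : IsClosed K) (h0 : μ s ≠ 0) (hs : μ s ≠ ⊤) (hfK : ∀ᵐ x ∂μ.restrict s, f x ∈ K)
    (hf : IntegrableOn f s μ) (hGf : IntegrableOn (G ∘ f) s μ) :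
    ∫ x in s, G (f x) ∂μ ≤ μ.real s * G (⨍ x in s, f x ∂μ) := by
  rw [← measure_smul_setAverage _ hs, smul_eq_mul]
  exact mul_le_mul_of_nonneg_left (hG.le_map_set_average hGc hK h0 hs hfK hf hGf)
    measureReal_nonneg

theorem integrableOn_comp_of_mapsTo {α : Type*} [MeasurableSpace α] {μ : Measure α} {s : Set α}
    {K : Set ℝ} {G : ℝ → ℝ} {f : α → ℝ} (hG : Continuous G) (hf : Measurable f)
    (hs : μ s ≠ ⊤) (hsm : MeasurableSet s) (hK : IsCompact K) (hfK : MapsTo f s K) :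
    IntegrableOn (fun x => G (f x)) s μ := by
  obtain ⟨C, hC⟩ := hK.exists_bound_of_continuousOn hG.continuousOn
  exact Measure.integrableOn_of_bounded hs (hG.measurable.comp hf).aestronglyMeasurable
    (ae_restrict_of_forall_mem hsm fun x hx => hC _ (hfK hx))

variable {σ : ℕ} (a : Fin σ → ℝ)

/-- The paper's `A_n = a_1 + ⋯ + a_n`, with `Fin σ` indexing from `0`. -/
noncomputable def partialSum (n : ℕ) : ℝ :=
  ∑ k ∈ Finset.univ.filter (fun k : Fin σ => (k : ℕ) < n), a k

theorem partialSum_zero : partialSum a 0 = 0 := by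
  simp [partialSum]

theorem partialSum_self : partialSum a σ = ∑ i, a i := by
  simp [partialSum]

theorem partialSum_succ (i : Fin σ) : partialSum a (i + 1) = partialSum a i + a i := by
  have h : Finset.univ.filter (fun k : Fin σ => (k : ℕ) < i + 1)
      = insert i (Finset.univ.filter (fun k : Fin σ => (k : ℕ) < i)) := by
    ext k
    simp only [Finset.mem_filter, Finset.mem_univ, true_and, Finset.mem_insert, Fin.ext_iff]
    omega
  rw [partialSum, partialSum, h, Finset.sum_insert (by simp), add_comm]

theorem partialSum_mono (ha : ∀ i, 0 ≤ a i) : Monotone (partialSum a) := fun _ _ hmn =>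
  Finset.sum_le_sum_of_subset_of_nonneg
    (Finset.monotone_filter_right _ fun _ _ hk => hk.trans_le hmn) fun k _ _ => ha k

theorem partialSum_le_succ (ha : ∀ i, 0 ≤ a i) (i : Fin σ) :
    partialSum a i ≤ partialSum a (i + 1) :=
  partialSum_mono a ha (Nat.le_succ _)

theorem uIoo_partialSum_subset (ha : ∀ i, 0 ≤ a i) (i : Fin σ) :
    uIoo (partialSum a i) (partialSum a (i + 1)) ⊆ Ico (partialSum a i) (partialSum a (i + 1)) := by
  rw [uIoo_of_le (partialSum_le_succ a ha i)]
  exact Ioo_subset_Ico_self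

theorem Ioc_partialSum_subset (ha : ∀ i, 0 ≤ a i) (i : Fin σ) :
    Ioc (partialSum a i) (partialSum a (i + 1)) ⊆ Icc 0 (∑ i, a i) := by
  rw [← partialSum_zero a, ← partialSum_self a]
  exact Ioc_subset_Icc_self.trans
    (Icc_subset_Icc (partialSum_mono a ha (Nat.zero_le _)) (partialSum_mono a ha i.isLt))

theorem volume_Ioc_partialSum (i : Fin σ) :
    volume (Ioc (partialSum a i) (partialSum a (i + 1))) = ENNReal.ofReal (a i) := by
  rw [Real.volume_Ioc, partialSum_succ, add_sub_cancel_left]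

theorem volume_real_Ioc_partialSum (ha : ∀ i, 0 ≤ a i) (i : Fin σ) :
    volume.real (Ioc (partialSum a i) (partialSum a (i + 1))) = a i := by
  rw [Real.volume_real_Ioc_of_le (partialSum_le_succ a ha i), partialSum_succ, add_sub_cancel_left]

theorem volume_Ioc_partialSum_ne_zero (ha : ∀ i, 0 < a i) (i : Fin σ) :
    volume (Ioc (partialSum a i) (partialSum a (i + 1))) ≠ 0 :=
  (volume_Ioc_partialSum a i ▸ ENNReal.ofReal_pos.2 (ha i)).ne'

theorem integral_eq_sum_integral_partialSum {g : ℝ → ℝ}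
    (hg : ∀ i : Fin σ, IntervalIntegrable g volume (partialSum a i) (partialSum a (i + 1))) :
    ∫ t in (0 : ℝ)..∑ i, a i, g t =
      ∑ i : Fin σ, ∫ t in partialSum a i..partialSum a (i + 1), g t := by
  rw [Fin.sum_univ_eq_sum_range (fun k => ∫ t in partialSum a k..partialSum a (k + 1), g t),
    intervalIntegral.sum_integral_adjacent_intervals fun k hk => hg ⟨k, hk⟩,
    partialSum_zero, partialSum_self]

theorem integral_eq_sum_of_eqOn_Ico (ha : ∀ i, 0 ≤ a i) {g : ℝ → ℝ} {C : Fin σ → ℝ}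
    (hg : ∀ i, EqOn g (fun _ => C i) (Ico (partialSum a i) (partialSum a (i + 1)))) :
    ∫ t in (0 : ℝ)..∑ i, a i, g t = ∑ i, a i * C i := by
  have hIoo i := (hg i).mono (uIoo_partialSum_subset a ha i)
  rw [integral_eq_sum_integral_partialSum a fun i =>
    intervalIntegrable_const.congr_uIoo (hIoo i).symm]
  refine Finset.sum_congr rfl fun i _ => ?_
  rw [intervalIntegral.integral_congr_uIoo (hIoo i), intervalIntegral.integral_const,
    partialSum_succ, add_sub_cancel_left, smul_eq_mul]

noncomputable def stepFunction (φ : Fin σ → ℝ) (t : ℝ) : ℝ :=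
  ∑ i : Fin σ, (Ico (partialSum a i) (partialSum a (i + 1))).indicator (fun _ => φ i) t

theorem measurable_stepFunction (φ : Fin σ → ℝ) : Measurable (stepFunction a φ) :=
  Finset.measurable_fun_sum _ fun _ _ => measurable_const.indicator measurableSet_Ico

theorem pairwise_disjoint_Ico_partialSum (ha : ∀ i, 0 ≤ a i) :
    Pairwise (Disjoint on fun i : Fin σ => Ico (partialSum a i) (partialSum a (i + 1))) :=
  fun _ _ hij => by
    simpa using (partialSum_mono a ha).pairwise_disjoint_on_Ico_succ (Fin.val_ne_of_ne hij)

theorem stepFunction_eq (ha : ∀ i, 0 ≤ a i) (φ : Fin σ → ℝ) {j : Fin σ} {t : ℝ}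
    (ht : t ∈ Ico (partialSum a j) (partialSum a (j + 1))) : stepFunction a φ t = φ j := by
  rw [stepFunction, Finset.sum_eq_single j (fun i _ hij => indicator_of_notMem
      (fun hi => disjoint_left.1 (pairwise_disjoint_Ico_partialSum a ha hij) hi ht) _) (by simp),
    indicator_of_mem ht]

theorem stepFunction_mem {K : Set ℝ} (ha : ∀ i, 0 ≤ a i) {φ : Fin σ → ℝ} (h0 : 0 ∈ K)
    (hφ : ∀ i, φ i ∈ K) (t : ℝ) : stepFunction a φ t ∈ K := by
  by_cases h : ∃ j : Fin σ, t ∈ Ico (partialSum a j) (partialSum a (j + 1))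
  · obtain ⟨j, hj⟩ := h
    exact stepFunction_eq a ha φ hj ▸ hφ j
  · push Not at h
    rwa [stepFunction, Finset.sum_eq_zero fun i _ => indicator_of_notMem (h i) _]

theorem integral_stepFunction (ha : ∀ i, 0 ≤ a i) (φ : Fin σ → ℝ) :
    ∫ t in (0 : ℝ)..∑ i, a i, stepFunction a φ t = ∑ i, a i * φ i :=
  integral_eq_sum_of_eqOn_Ico a ha fun _ _ ht => stepFunction_eq a ha φ ht

theorem integral_comp_stepFunction (ha : ∀ i, 0 ≤ a i) (φ : Fin σ → ℝ) {r : ℝ → ℝ}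
    {L : Fin σ → ℝ} (hr : ∀ i, EqOn r (fun _ => L i) (Ico (partialSum a i) (partialSum a (i + 1))))
    (F : ℝ → ℝ) :
    ∫ t in (0 : ℝ)..∑ i, a i, (r t * stepFunction a φ t + F (stepFunction a φ t)) =
      ∑ i, a i * (φ i * L i + F (φ i)) :=
  integral_eq_sum_of_eqOn_Ico a ha fun i t ht => by
    simp only [hr i ht, stepFunction_eq a ha φ ht, mul_comm (L i)]

noncomputable def pieceAverage (θ : ℝ → ℝ) (i : Fin σ) : ℝ :=
  ⨍ t in Ioc (partialSum a i) (partialSum a (i + 1)), θ t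

section Averages

variable {a} (ha : ∀ i, 0 < a i) {θ : ℝ → ℝ} (hθm : Measurable θ)
  (hθ : MapsTo θ (Icc 0 (∑ i, a i)) (Icc 0 1))
include ha hθm hθ

theorem integrableOn_comp_Ioc_partialSum {G : ℝ → ℝ} (hG : Continuous G) (i : Fin σ) :
    IntegrableOn (fun t => G (θ t)) (Ioc (partialSum a i) (partialSum a (i + 1))) :=
  integrableOn_comp_of_mapsTo hG hθm measure_Ioc_lt_top.ne measurableSet_Ioc isCompact_Icc
    (hθ.mono_left (Ioc_partialSum_subset a (fun i => (ha i).le) i))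

theorem intervalIntegrable_comp_partialSum {G : ℝ → ℝ} (hG : Continuous G) (i : Fin σ) :
    IntervalIntegrable (fun t => G (θ t)) volume (partialSum a i) (partialSum a (i + 1)) :=
  (intervalIntegrable_iff_integrableOn_Ioc_of_le (partialSum_le_succ a (fun i => (ha i).le) i)).2
    (integrableOn_comp_Ioc_partialSum ha hθm hθ hG i)

theorem pieceAverage_mem_Icc (i : Fin σ) : pieceAverage a θ i ∈ Icc (0 : ℝ) 1 :=
  (convex_Icc 0 1).set_average_mem isClosed_Icc
    (volume_Ioc_partialSum_ne_zero a ha i) measure_Ioc_lt_top.ne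
    (ae_restrict_of_forall_mem measurableSet_Ioc
      (hθ.mono_left (Ioc_partialSum_subset a (fun i => (ha i).le) i)))
    (integrableOn_comp_Ioc_partialSum ha hθm hθ continuous_id i)

theorem integral_eq_sum_pieceAverage :
    ∫ t in (0 : ℝ)..∑ i, a i, θ t = ∑ i, a i * pieceAverage a θ i := by
  rw [integral_eq_sum_integral_partialSum a (g := θ)
    (intervalIntegrable_comp_partialSum ha hθm hθ continuous_id)]
  refine Finset.sum_congr rfl fun i _ => ?_
  rw [intervalIntegral.integral_of_le (partialSum_le_succ a (fun i => (ha i).le) i),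
    ← measure_smul_setAverage _ measure_Ioc_lt_top.ne,
    volume_real_Ioc_partialSum a (fun i => (ha i).le), smul_eq_mul, pieceAverage]

theorem integral_le_sum_pieceAverage {r : ℝ → ℝ} {L : Fin σ → ℝ}
    (hr : ∀ i, EqOn r (fun _ => L i) (Ico (partialSum a i) (partialSum a (i + 1))))
    {F : ℝ → ℝ} (hFc : Continuous F) (hF : ConcaveOn ℝ (Icc 0 1) F) :
    ∫ t in (0 : ℝ)..∑ i, a i, (r t * θ t + F (θ t)) ≤
      ∑ i, a i * (pieceAverage a θ i * L i + F (pieceAverage a θ i)) := by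
  have ha₀ i : 0 ≤ a i := (ha i).le
  have hGc i : Continuous fun x => x * L i + F x := (continuous_id.mul continuous_const).add hFc
  have hIoo i : EqOn (fun t => r t * θ t + F (θ t)) (fun t => θ t * L i + F (θ t))
      (uIoo (partialSum a i) (partialSum a (i + 1))) := fun t ht => by
    simp only [hr i (uIoo_partialSum_subset a ha₀ i ht), mul_comm]
  rw [integral_eq_sum_integral_partialSum a fun i =>
    (intervalIntegrable_comp_partialSum ha hθm hθ (hGc i) i).congr_uIoo (hIoo i).symm]
  refine Finset.sum_le_sum fun i _ => ?_
  rw [intervalIntegral.integral_congr_uIoo (hIoo i),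
    intervalIntegral.integral_of_le (partialSum_le_succ a ha₀ i),
    ← volume_real_Ioc_partialSum a ha₀ i]
  exact (hF.mul_const_add (convex_Icc 0 1) (L i)).setIntegral_comp_le (hGc i).continuousOn
    isClosed_Icc (volume_Ioc_partialSum_ne_zero a ha i) measure_Ioc_lt_top.ne
    (ae_restrict_of_forall_mem measurableSet_Ioc (hθ.mono_left (Ioc_partialSum_subset a ha₀ i)))
    (integrableOn_comp_Ioc_partialSum ha hθm hθ continuous_id i)
    (integrableOn_comp_Ioc_partialSum ha hθm hθ (hGc i) i)

end Averages

end

theorem limit_control_problem_reduction_general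
    (σ : ℕ) (s : Fin σ → ℕ)
    (a : Fin σ → ℝ) (ha : ∀ i, 0 < a i) (hsum : ∑ i, a i = 1)
    (rt : ℝ → ℝ)
    (hrt : ∀ i : Fin σ, ∀ t : ℝ,
      (∑ k ∈ univ.filter (fun k => k < i), a k) ≤ t →
      t < (∑ k ∈ univ.filter (fun k => k < i), a k) + a i →
      rt t = Real.log ((s i : ℝ) - 1))
    (c : ℝ) :
    sSup {v : ℝ | ∃ θ : ℝ → ℝ, Measurable θ ∧
        (∀ t ∈ Set.Icc (0 : ℝ) 1, θ t ∈ Set.Icc (0 : ℝ) 1) ∧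
        (∫ t in (0 : ℝ)..1, θ t) ≤ c ∧
        v = ∫ t in (0 : ℝ)..1, (rt t * θ t + Hent (θ t))}
    = sSup {v : ℝ | ∃ θ : Fin σ → ℝ, (∀ i, θ i ∈ Set.Icc (0 : ℝ) 1) ∧
        (∑ i, a i * θ i) ≤ c ∧
        v = ∑ i, a i * (θ i * Real.log ((s i : ℝ) - 1) + Hent (θ i))} := by
  have ha₀ i : 0 ≤ a i := (ha i).le
  have hr i : Set.EqOn rt (fun _ => Real.log ((s i : ℝ) - 1))
      (Set.Ico (partialSum a i) (partialSum a (i + 1))) := fun t ht =>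
    hrt i t ht.1 (partialSum_succ a i ▸ ht.2)
  apply csSup_eq_csSup_of_forall_exists_le
  · rintro v ⟨θ, hθm, hθ, hθc, rfl⟩
    have hθ' : Set.MapsTo θ (Set.Icc 0 (∑ i, a i)) (Set.Icc 0 1) := hsum ▸ hθ
    refine ⟨_, ⟨pieceAverage a θ, pieceAverage_mem_Icc ha hθm hθ', ?_, rfl⟩, ?_⟩
    · exact (integral_eq_sum_pieceAverage ha hθm hθ').symm.trans_le (hsum ▸ hθc)
    · have := integral_le_sum_pieceAverage ha hθm hθ' hr continuous_Hent concaveOn_Hent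
      rwa [hsum] at this
  · rintro v ⟨φ, hφ, hφc, rfl⟩
    refine ⟨_, ⟨stepFunction a φ, measurable_stepFunction a φ,
      fun t _ => stepFunction_mem a ha₀ (Set.left_mem_Icc.2 zero_le_one) hφ t, ?_, rfl⟩, ?_⟩
    · exact (hsum ▸ integral_stepFunction a ha₀ φ).trans_le hφc
    · have := integral_comp_stepFunction a ha₀ φ hr Hent
      rw [hsum] at this
      exact this.ge

/-- reduction of the limit calculus-of-variations problem to a
finite-dimensional concave optimization problem. -/
theorem limit_control_problem_reduction
    (σ : ℕ) (hσ : 1 ≤ σ) (s : Fin σ → ℕ) (hs : ∀ i, 2 ≤ s i)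
    (a : Fin σ → ℝ) (ha : ∀ i, 0 < a i) (hsum : ∑ i, a i = 1)
    (rt : ℝ → ℝ)
    (hrt : ∀ i : Fin σ, ∀ t : ℝ,
      (∑ k ∈ univ.filter (fun k => k < i), a k) ≤ t →
      t < (∑ k ∈ univ.filter (fun k => k < i), a k) + a i →
      rt t = Real.log ((s i : ℝ) - 1))
    (c : ℝ) (hc : c ∈ Set.Ioo (0 : ℝ) 1) :
    sSup {v : ℝ | ∃ θ : ℝ → ℝ, Measurable θ ∧
        (∀ t ∈ Set.Icc (0 : ℝ) 1, θ t ∈ Set.Icc (0 : ℝ) 1) ∧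
        (∫ t in (0 : ℝ)..1, θ t) ≤ c ∧
        v = ∫ t in (0 : ℝ)..1, (rt t * θ t + Hent (θ t))}
    = sSup {v : ℝ | ∃ θ : Fin σ → ℝ, (∀ i, θ i ∈ Set.Icc (0 : ℝ) 1) ∧
        (∑ i, a i * θ i) ≤ c ∧
        v = ∑ i, a i * (θ i * Real.log ((s i : ℝ) - 1) + Hent (θ i))} :=
  limit_control_problem_reduction_general σ s a ha hsum rt hrt c
end

section
/- n-step martingale identity: let λ ∈ ℝ and set, for each block i, θ_i* = (s_i − 1)/(e^λ + s_i − 1) and w_i = 2λθ_i* − 2θ_i* log(s_i − 1) − 2H(θ_i*). Define the sampling weights q(1,j) = θ*_{b(j)} and q(0,j) = 1 − θ*_{b(j)}. Then ∑_{x ∈ {0,1}^n} ∏_{j=1}^n [ e^{−2λ x_j + w_{b(j)}} · r(x_j, j)^2 / q(x_j, j) ] = 1. -/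
open Finset

/-- `n`-step martingale identity for the importance-sampling
change of measure built from the subsolution. -/
theorem subsolution_n_step_identity
    (σ : ℕ) (hσ : 1 ≤ σ) (s : Fin σ → ℕ) (hs : ∀ i, 2 ≤ s i)
    (n : ℕ) (l : Fin σ → ℕ) (hl : ∑ i, l i = n)
    (b : ℕ → Fin σ)
    (hb : ∀ j < n, ∀ i : Fin σ, b j = i ↔
      (∑ k ∈ univ.filter (fun k => k < i), l k) ≤ j ∧
        j < (∑ k ∈ univ.filter (fun k => k < i), l k) + l i)
    (lam : ℝ) (θstar w : Fin σ → ℝ)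
    (hθ : ∀ i, θstar i = ((s i : ℝ) - 1) / (Real.exp lam + (s i : ℝ) - 1))
    (hw : ∀ i, w i = 2 * lam * θstar i - 2 * θstar i * Real.log ((s i : ℝ) - 1)
        - 2 * Hent (θstar i)) :
    ∑ x : Fin n → Bool, ∏ j : Fin n,
        (Real.exp (-2 * lam * (if x j then (1 : ℝ) else 0) + w (b j.val))
          * (if x j then (s (b j.val) : ℝ) - 1 else 1) ^ 2
          / (if x j then θstar (b j.val) else 1 - θstar (b j.val))) = 1 := by
  rw [← Fintype.prod_sum (fun (j : Fin n) (y : Bool) =>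
        (Real.exp (-2 * lam * (if y then (1 : ℝ) else 0) + w (b j.val))
          * (if y then (s (b j.val) : ℝ) - 1 else 1) ^ 2
          / (if y then θstar (b j.val) else 1 - θstar (b j.val))))]
  apply Finset.prod_eq_one
  intro j _
  rw [Fintype.sum_bool]
  simp only [Bool.false_eq_true, if_true, if_false]
  set i := b j.val with hidef
  have hs2 : (2:ℝ) ≤ (s i : ℝ) := by exact_mod_cast hs i
  set S : ℝ := (s i : ℝ) - 1 with hSdef
  have hS : 0 < S := by rw [hSdef]; linarith
  set E := Real.exp lam with hEdef
  have hE : 0 < E := Real.exp_pos lam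
  set D := E + S with hDdef
  have hD : 0 < D := by linarith
  have hθi : θstar i = S / D := by
    rw [hθ i, hDdef, hSdef, hEdef]; ring_nf
  have h1θ : 1 - θstar i = E / D := by
    rw [hθi]; field_simp; rw [hDdef]; ring
  have hθpos : 0 < θstar i := by rw [hθi]; positivity
  have hlogθ : Real.log (θstar i) = Real.log S - Real.log D := by
    rw [hθi, Real.log_div hS.ne' hD.ne']
  have hlog1θ : Real.log (1 - θstar i) = lam - Real.log D := by
    rw [h1θ, Real.log_div hE.ne' hD.ne', hEdef, Real.log_exp]
  have hwi : w i = 2 * lam - 2 * Real.log D := by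
    rw [hw i, Hent, hlogθ, hlog1θ, ← hSdef]; ring
  have hexpw : Real.exp (w i) = (E / D) ^ 2 := by
    rw [hwi, show 2 * lam - 2 * Real.log D = (lam + lam) - (Real.log D + Real.log D) by ring,
      Real.exp_sub, Real.exp_add, Real.exp_add, Real.exp_log hD, ← hEdef, div_pow,
      sq, sq]
  have ht : Real.exp (-2 * lam * 1 + w i) = (E / D) ^ 2 / (E * E) := by
    rw [show -2 * lam * 1 + w i = w i - (lam + lam) by ring, Real.exp_sub, Real.exp_add,
      hexpw, ← hEdef]
  have hf : Real.exp (-2 * lam * 0 + w i) = (E / D) ^ 2 := by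
    rw [show -2 * lam * 0 + w i = w i by ring, hexpw]
  rw [ht, hf, h1θ, hθi]
  field_simp
  ring
end

section
/- Large deviations limit of the Rao bound (main convergence theorem): let s_1,…,s_σ ≥ 2 be integers, a_1,…,a_σ > 0 with ∑ a_i = 1, and μ ∈ (0,1). For each n let l_1^{(n)},…,l_σ^{(n)} ∈ ℕ with ∑_i l_i^{(n)} = n and l_i^{(n)}/n → a_i, let b_n and r_n be the corresponding block and running-cost functions, and let T_n ∈ ℕ with T_n/n → μ/2. Then lim_{n→∞} (1/n) log ( ∑_{x ∈ {0,1}^n with S(x) ≤ T_n} ∏_{j=1}^n r_n(x_j, j) ) = sup { ∑_{i=1}^σ a_i ( θ_i log(s_i − 1) + H(θ_i) ) : θ ∈ (0,1)^σ, ∑_{i=1}^σ a_i θ_i = μ/2 }. -/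
/-!
Write `wᵢ = sᵢ - 1`. For `λ ≤ 0`, Chernoff's bound `1_{S(x) ≤ T} ≤ e^{λ (S(x) - T)}` turns the
truncated sum into a product: `(1/n) log Zₙ ≤ -λ Tₙ/n + ∑ᵢ (lᵢ/n) log (1 + wᵢ e^λ)`. Conversely,
the words with exactly `⌊θᵢ lᵢ⌋` ones in block `i` contribute `∏ᵢ C(lᵢ, ⌊θᵢ lᵢ⌋) wᵢ^⌊θᵢ lᵢ⌋`,
which by Stirling is `exp (n ∑ᵢ aᵢ (θᵢ log wᵢ + H(θᵢ)) + o(n))`, provided `∑ᵢ aᵢ θᵢ < μ/2`.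

The two exponents meet by Gibbs' inequality `θ log w + H(θ) ≤ log (1 + w e^λ) - λθ`, with
equality at the tilted parameter `θ = w e^λ / (1 + w e^λ)`. Since `wᵢ ≥ 1` and `μ/2 < 1/2`, the
intermediate value theorem gives `λ ≤ 0` whose tilted parameters satisfy `∑ᵢ aᵢ θᵢ = μ/2`; they
attain the supremum, and shrinking them by a factor `δ < 1` makes them strictly feasible.
-/

open Finset

namespace RaoBound

open Real Filter Topology
open scoped Nat

theorem Hent_eq_binEntropy : Hent = binEntropy := by
  ext θ
  simp only [Hent, binEntropy, log_inv]
  ring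

theorem continuous_Hent : Continuous Hent :=
  Hent_eq_binEntropy ▸ binEntropy_continuous

noncomputable def tilt (w lam : ℝ) : ℝ := w * exp lam / (1 + w * exp lam)

theorem tilt_mem_Ioo {w : ℝ} (hw : 0 < w) (lam : ℝ) : tilt w lam ∈ Set.Ioo 0 1 := by
  have : 0 < w * exp lam := by positivity
  exact ⟨by unfold tilt; positivity, (div_lt_one (by linarith)).2 (by linarith)⟩

/-- Concavity of `log` at the points `w e^λ / θ` and `1 / (1 - θ)` with weights `θ`, `1 - θ`. -/
theorem mul_log_add_Hent_le {w θ : ℝ} (hw : 0 < w) (hθ : θ ∈ Set.Ioo 0 1) (lam : ℝ) :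
    θ * log w + Hent θ ≤ log (1 + w * exp lam) - lam * θ := by
  obtain ⟨hθ0, hθ1⟩ := hθ
  have h1θ : 0 < 1 - θ := by linarith
  have hconc := strictConcaveOn_log_Ioi.concaveOn.2
    (show 0 < w * exp lam / θ by positivity) (show 0 < 1 / (1 - θ) by positivity)
    hθ0.le h1θ.le (add_sub_cancel θ 1)
  have hmid : θ • (w * exp lam / θ) + (1 - θ) • (1 / (1 - θ)) = 1 + w * exp lam := by
    simp only [smul_eq_mul]
    field_simp
    ring
  rw [hmid, smul_eq_mul, smul_eq_mul, log_div (by positivity) hθ0.ne',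
    log_mul hw.ne' (exp_pos _).ne', log_exp, one_div, log_inv] at hconc
  unfold Hent
  linarith

theorem tilt_mul_log_add_Hent {w : ℝ} (hw : 0 < w) (lam : ℝ) :
    tilt w lam * log w + Hent (tilt w lam) = log (1 + w * exp lam) - lam * tilt w lam := by
  have hZ : 0 < 1 + w * exp lam := by positivity
  have hcompl : 1 - tilt w lam = (1 + w * exp lam)⁻¹ := by
    unfold tilt
    field_simp
    ring
  have hlog : log (tilt w lam) = log w + lam - log (1 + w * exp lam) := by
    rw [tilt, log_div (by positivity) hZ.ne', log_mul hw.ne' (exp_pos _).ne', log_exp]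
  rw [Hent, hcompl, hlog, log_inv]
  linear_combination -log (1 + w * exp lam) * hcompl

theorem continuous_tilt {w : ℝ} (hw : 0 ≤ w) : Continuous (tilt w) :=
  Continuous.div (by fun_prop) (by fun_prop) fun _ => by positivity

theorem tendsto_tilt_atBot (w : ℝ) : Tendsto (tilt w) atBot (𝓝 0) := by
  have h : ContinuousAt (fun x : ℝ => w * x / (1 + w * x)) 0 := by
    fun_prop (disch := norm_num)
  unfold tilt
  simpa [Function.comp_def] using h.tendsto.comp tendsto_exp_atBot

theorem exists_nonpos_sum_mul_tilt_eq {ι : Type*} [Fintype ι] {a w : ι → ℝ}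
    (ha : ∀ i, 0 ≤ a i) (hsuma : ∑ i, a i = 1) (hw : ∀ i, 1 ≤ w i) {m : ℝ} (hm0 : 0 < m)
    (hm : m ≤ 1 / 2) : ∃ lam ≤ 0, ∑ i, a i * tilt (w i) lam = m := by
  set F : ℝ → ℝ := fun lam => ∑ i, a i * tilt (w i) lam
  have hF : Continuous F :=
    continuous_finsetSum _ fun i _ => continuous_const.mul (continuous_tilt (by linarith [hw i]))
  have hF_atBot : Tendsto F atBot (𝓝 0) := by
    simpa using tendsto_finsetSum univ fun i _ => (tendsto_tilt_atBot (w i)).const_mul (a i)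
  obtain ⟨lam₀, hlam₀, hFlam₀⟩ :=
    ((eventually_le_atBot 0).and (hF_atBot.eventually (gt_mem_nhds hm0))).exists
  have hF0 : 1 / 2 ≤ F 0 := calc
    1 / 2 = ∑ i, a i * (1 / 2) := by rw [← sum_mul, hsuma, one_mul]
    _ ≤ F 0 := sum_le_sum fun i _ => mul_le_mul_of_nonneg_left (by
        rw [tilt, exp_zero, mul_one, le_div_iff₀ (by linarith [hw i])]; linarith [hw i]) (ha i)
  obtain ⟨lam, hlam, hFlam⟩ :=
    intermediate_value_Icc hlam₀ hF.continuousOn ⟨hFlam₀.le, hm.trans hF0⟩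
  exact ⟨lam, hlam.2, hFlam⟩

section Variational

variable {ι : Type*} [Fintype ι] {a w : ι → ℝ}

noncomputable abbrev growthRate (a w θ : ι → ℝ) : ℝ := ∑ i, a i * (θ i * log (w i) + Hent (θ i))

theorem continuous_growthRate (a w : ι → ℝ) : Continuous (growthRate a w) := by
  have := continuous_Hent
  unfold growthRate
  fun_prop

theorem growthRate_le (ha : ∀ i, 0 ≤ a i) (hw : ∀ i, 0 < w i) {θ : ι → ℝ}
    (hθ : ∀ i, θ i ∈ Set.Ioo 0 1) (lam : ℝ) :
    growthRate a w θ ≤ ∑ i, a i * log (1 + w i * exp lam) - lam * ∑ i, a i * θ i := by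
  rw [mul_sum, ← sum_sub_distrib]
  refine sum_le_sum fun i _ => ?_
  nlinarith [mul_le_mul_of_nonneg_left (mul_log_add_Hent_le (hw i) (hθ i) lam) (ha i)]

theorem growthRate_tilt (hw : ∀ i, 0 < w i) (lam : ℝ) :
    growthRate a w (fun i => tilt (w i) lam)
      = ∑ i, a i * log (1 + w i * exp lam) - lam * ∑ i, a i * tilt (w i) lam := by
  simp only [growthRate, tilt_mul_log_add_Hent (hw _), mul_sum, ← sum_sub_distrib]
  exact sum_congr rfl fun i _ => by ring

theorem isGreatest_growthRate (ha : ∀ i, 0 ≤ a i) (hw : ∀ i, 0 < w i) {lam m : ℝ}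
    (hm : ∑ i, a i * tilt (w i) lam = m) :
    IsGreatest {v | ∃ θ : ι → ℝ, (∀ i, θ i ∈ Set.Ioo 0 1) ∧ ∑ i, a i * θ i = m ∧
      v = growthRate a w θ} (growthRate a w fun i => tilt (w i) lam) := by
  refine ⟨⟨_, fun i => tilt_mem_Ioo (hw i) lam, hm, rfl⟩, ?_⟩
  rintro v ⟨θ, hθ, hθm, rfl⟩
  rw [growthRate_tilt hw, hm, ← hθm]
  exact growthRate_le ha hw hθ lam

theorem exists_scale_lt_growthRate {θ : ι → ℝ} {c : ℝ} (hc : c < growthRate a w θ) :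
    ∃ δ ∈ Set.Ioo (0 : ℝ) 1, c < growthRate a w (δ • θ) := by
  have hscale : Tendsto (fun δ : ℝ => δ • θ) (𝓝[<] 1) (𝓝 θ) := by
    simpa using (tendsto_nhdsWithin_of_tendsto_nhds (tendsto_id (x := 𝓝 (1 : ℝ)))).smul_const θ
  have hlt := ((continuous_growthRate a w).tendsto θ).comp hscale |>.eventually (lt_mem_nhds hc)
  exact (Filter.Eventually.and (Ioo_mem_nhdsLT zero_lt_one) hlt).exists

end Variational

section RaoSum

variable {J : Type*} [Fintype J]

theorem prod_ite_nonneg {v : J → ℝ} (hv : ∀ j, 0 ≤ v j) (x : J → Bool) :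
    0 ≤ ∏ j, if x j then v j else 1 :=
  prod_nonneg fun j _ => by split_ifs <;> simp [hv j]

theorem prod_ite_eq_pow_card {M : Type*} [CommMonoid M] (x : J → Bool) (c : M) :
    ∏ j, (if x j then c else 1) = c ^ #{j | x j} := by
  rw [prod_ite, prod_const, prod_const_one, mul_one]

theorem prod_ite_comp_eq_prod_pow {ι : Type*} [Fintype ι] [DecidableEq ι] (β : J → ι)
    (w : ι → ℝ) (x : J → Bool) :
    ∏ j, (if x j then w (β j) else 1) = ∏ i, w i ^ #{j | β j = i ∧ x j} := by
  rw [← prod_fiberwise univ β]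
  refine prod_congr rfl fun i _ => ?_
  rw [prod_congr rfl fun j hj => by rw [(mem_filter.1 hj).2], prod_ite, prod_const,
    prod_const_one, mul_one, filter_filter]

variable [DecidableEq J]

/-- `∑_{S(x) ≤ T} ∏ⱼ r(xⱼ, j)` for the running cost `r(1, j) = v j`, `r(0, j) = 1`. -/
noncomputable def raoSum (v : J → ℝ) (T : ℕ) : ℝ :=
  ∑ x ∈ univ.filter (fun x : J → Bool => (∑ j, if x j then 1 else 0) ≤ T),
    ∏ j, if x j then v j else 1

theorem sum_prod_ite_eq_prod_one_add (v : J → ℝ) :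
    ∑ x : J → Bool, ∏ j, (if x j then v j else 1) = ∏ j, (1 + v j) := by
  rw [← Fintype.prod_sum (fun j (b : Bool) => if b then v j else 1)]
  exact prod_congr rfl fun j _ => by simp [add_comm]

theorem one_le_raoSum {v : J → ℝ} (hv : ∀ j, 0 ≤ v j) (T : ℕ) : 1 ≤ raoSum v T := by
  unfold raoSum
  simpa using single_le_sum (fun x _ => prod_ite_nonneg hv x)
    (mem_filter.2 ⟨mem_univ (fun _ => false), by simp⟩)

/-- Chernoff's bound: on `S(x) ≤ T` and for `λ ≤ 0`, the factor `e^{λ (S(x) - T)}` is `≥ 1`. -/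
theorem raoSum_le_exp_mul_prod {v : J → ℝ} (hv : ∀ j, 0 ≤ v j) {lam : ℝ} (hlam : lam ≤ 0)
    (T : ℕ) : raoSum v T ≤ exp (-(lam * T)) * ∏ j, (1 + v j * exp lam) := by
  rw [raoSum, ← sum_prod_ite_eq_prod_one_add, mul_sum]
  refine (sum_le_sum fun x hx => ?_).trans (sum_le_sum_of_subset_of_nonneg (subset_univ _)
    fun x _ _ => mul_nonneg (exp_pos _).le
      (prod_ite_nonneg (fun j => mul_nonneg (hv j) (exp_pos _).le) x))
  have hS : #{j | x j} ≤ T := by rw [card_filter]; exact (mem_filter.1 hx).2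
  have htilt : ∏ j, (if x j then v j * exp lam else 1)
      = (∏ j, if x j then v j else 1) * exp lam ^ #{j | x j} := by
    rw [← prod_ite_eq_pow_card, ← prod_mul_distrib]
    exact prod_congr rfl fun j _ => by split_ifs <;> ring
  have hexp : 1 ≤ exp (-(lam * T)) * exp lam ^ #{j | x j} := by
    rw [← exp_nat_mul, ← exp_add]
    exact one_le_exp (by nlinarith [(Nat.cast_le (α := ℝ)).2 hS])
  rw [htilt]
  nlinarith [prod_ite_nonneg hv x]

variable {ι : Type*} [Fintype ι] [DecidableEq ι]

theorem card_filter_card_fiber_eq (β : J → ι) (t : ι → ℕ) :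
    #{x : J → Bool | ∀ i, #{j | β j = i ∧ x j} = t i}
      = ∏ i, (#{j | β j = i}).choose (t i) := by
  simp_rw [← card_powersetCard, ← Fintype.card_piFinset]
  have hglue : ∀ A : ι → Finset J, (∀ i, A i ⊆ ({j | β j = i} : Finset J)) →
      ∀ i, ({j | β j = i ∧ decide (j ∈ A (β j))} : Finset J) = A i := by
    intro A hA i
    ext j
    simp only [mem_filter, mem_univ, true_and, decide_eq_true_eq]
    refine ⟨fun ⟨h, hj⟩ => h ▸ hj, fun hj => ?_⟩
    obtain rfl := (mem_filter.1 (hA i hj)).2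
    exact ⟨rfl, hj⟩
  refine card_nbij' (fun x i => {j | β j = i ∧ x j}) (fun A j => decide (j ∈ A (β j)))
    ?_ ?_ ?_ ?_
  · intro x hx
    simp only [coe_filter, mem_univ, true_and, Set.mem_ofPred_eq] at hx
    simp only [Fintype.coe_piFinset, Set.mem_pi, Set.mem_univ, mem_coe, mem_powersetCard,
      forall_const]
    exact fun i => ⟨fun j hj => by simp_all, hx i⟩
  · intro A hA
    simp only [Fintype.coe_piFinset, Set.mem_pi, Set.mem_univ, mem_coe, mem_powersetCard,
      forall_const] at hA
    simp only [coe_filter, mem_univ, true_and, Set.mem_ofPred_eq]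
    exact fun i => (hglue A (fun i => (hA i).1) i).symm ▸ (hA i).2
  · intro x _
    funext j
    simp
  · intro A hA
    simp only [Fintype.coe_piFinset, Set.mem_pi, Set.mem_univ, mem_coe, mem_powersetCard,
      forall_const] at hA
    exact funext (hglue A fun i => (hA i).1)

theorem prod_choose_mul_pow_le_raoSum (β : J → ι) {w : ι → ℝ} (hw : ∀ i, 0 ≤ w i)
    {t : ι → ℕ} {T : ℕ} (hT : ∑ i, t i ≤ T) :
    ∏ i, ((#{j | β j = i}).choose (t i) * w i ^ t i : ℝ) ≤ raoSum (fun j => w (β j)) T := by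
  set E : Finset (J → Bool) := {x | ∀ i, #{j | β j = i ∧ x j} = t i}
  have hE : E ⊆ univ.filter (fun x : J → Bool => (∑ j, if x j then 1 else 0) ≤ T) := by
    intro x hx
    rw [mem_filter] at hx ⊢
    refine ⟨mem_univ x, ?_⟩
    rw [← card_filter,
      card_eq_sum_card_fiberwise (f := β) (t := univ) fun _ _ => mem_coe.2 (mem_univ _)]
    refine le_of_eq_of_le (sum_congr rfl fun i _ => ?_) hT
    rw [filter_filter, ← hx.2 i]
    simp only [and_comm]
  calc ∏ i, ((#{j | β j = i}).choose (t i) * w i ^ t i : ℝ)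
      = ∑ x ∈ E, ∏ i, w i ^ t i := by
        rw [sum_const, card_filter_card_fiber_eq, nsmul_eq_mul, prod_mul_distrib]
        push_cast
        rfl
    _ = ∑ x ∈ E, ∏ j, if x j then w (β j) else 1 :=
        sum_congr rfl fun x hx => by simp only [prod_ite_comp_eq_prod_pow, (mem_filter.1 hx).2]
    _ ≤ raoSum (fun j => w (β j)) T :=
        sum_le_sum_of_subset_of_nonneg hE fun x _ _ => prod_ite_nonneg (fun j => hw (β j)) x

theorem log_raoSum_le (β : J → ι) {w : ι → ℝ} (hw : ∀ i, 0 ≤ w i) {lam : ℝ} (hlam : lam ≤ 0)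
    (T : ℕ) : log (raoSum (fun j => w (β j)) T)
      ≤ -(lam * T) + ∑ i, #{j | β j = i} * log (1 + w i * exp lam) := by
  have hfac : ∀ j, 0 < 1 + w (β j) * exp lam := fun j => by have := hw (β j); positivity
  refine (log_le_log (one_pos.trans_le (one_le_raoSum (fun j => hw (β j)) T))
    (raoSum_le_exp_mul_prod (fun j => hw (β j)) hlam T)).trans_eq ?_
  rw [log_mul (exp_pos _).ne' (prod_pos fun j _ => hfac j).ne', log_exp,
    log_prod fun j _ => (hfac j).ne', ← sum_fiberwise univ β]
  congr 1
  refine sum_congr rfl fun i _ => ?_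
  rw [sum_congr rfl fun j hj => by rw [(mem_filter.1 hj).2], sum_const, nsmul_eq_mul]

theorem sum_log_choose_add_le_log_raoSum (β : J → ι) {w : ι → ℝ} (hw : ∀ i, 0 < w i)
    {t : ι → ℕ} (ht : ∀ i, t i ≤ #{j | β j = i}) {T : ℕ} (hT : ∑ i, t i ≤ T) :
    ∑ i, (log ((#{j | β j = i}).choose (t i)) + t i * log (w i))
      ≤ log (raoSum (fun j => w (β j)) T) := by
  have hterm : ∀ i, 0 < ((#{j | β j = i}).choose (t i) * w i ^ t i : ℝ) := fun i => by
    have := hw i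
    have := Nat.choose_pos (ht i)
    positivity
  refine le_of_eq_of_le ?_ (log_le_log (prod_pos fun i _ => hterm i)
    (prod_choose_mul_pow_le_raoSum β (fun i => (hw i).le) hT))
  rw [log_prod fun i _ => (hterm i).ne']
  refine sum_congr rfl fun i _ => ?_
  rw [log_mul (by have := Nat.choose_pos (ht i); positivity) (pow_pos (hw i) _).ne', log_pow]

end RaoSum

theorem card_filter_eq_of_block {σ n : ℕ} {l : Fin σ → ℕ} (hl : ∑ i, l i = n)
    {β : Fin n → Fin σ} (hβ : ∀ j : Fin n, ∀ i, β j = i ↔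
      (∑ k ∈ univ.filter (fun k => k < i), l k) ≤ j ∧
        j < (∑ k ∈ univ.filter (fun k => k < i), l k) + l i) (i : Fin σ) :
    #{j | β j = i} = l i := by
  set c := ∑ k ∈ univ.filter (fun k => k < i), l k
  have hcn : c + l i ≤ n := by
    rw [← hl, add_comm, ← sum_insert (s := univ.filter (fun k => k < i)) (by simp)]
    exact sum_le_sum_of_subset (subset_univ _)
  have hfiber : ({j | β j = i} : Finset (Fin n))
      = (Ico c (c + l i)).attachFin fun _ hm => (mem_Ico.1 hm).2.trans_le hcn := by
    ext j
    simp only [mem_filter, mem_univ, true_and, mem_attachFin, mem_Ico]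
    exact hβ j i
  rw [hfiber, card_attachFin, Nat.card_Ico, Nat.add_sub_cancel_left]

section Asymptotics

theorem tendsto_log_factorial_sub_div :
    Tendsto (fun N : ℕ => (log N ! - N * log N + N) / N) atTop (𝓝 0) := by
  have hstirling : Tendsto (fun N : ℕ => log (Stirling.stirlingSeq N) / N) atTop (𝓝 0) :=
    ((continuousAt_log (sqrt_pos.2 pi_pos).ne').tendsto.comp
      Stirling.tendsto_stirlingSeq_sqrt_pi).div_atTop tendsto_natCast_atTop_atTop
  have hlog : Tendsto (fun N : ℕ => log (2 * N) / N) atTop (𝓝 0) := by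
    refine ((tendsto_pow_log_div_mul_add_atTop (1 / 2) 0 1 (by norm_num)).comp
      (tendsto_natCast_atTop_atTop.const_mul_atTop two_pos)).congr fun N => ?_
    simp only [Function.comp_apply, pow_one, add_zero]
    ring_nf
  have hsum := hstirling.add (hlog.const_mul (1 / 2))
  rw [mul_zero, add_zero] at hsum
  refine hsum.congr' ?_
  filter_upwards [eventually_gt_atTop 0] with N hN
  rw [Stirling.log_stirlingSeq_formula, log_div (by positivity) (exp_pos 1).ne', log_exp]
  ring

variable {v : ℕ → ℕ} {c : ℝ}

theorem eventually_pos_of_tendsto_div (hc : 0 < c)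
    (hv : Tendsto (fun m => (v m : ℝ) / m) atTop (𝓝 c)) : ∀ᶠ m in atTop, 0 < v m :=
  (hv.eventually (lt_mem_nhds hc)).mono fun m hm =>
    Nat.pos_of_ne_zero fun h => by simp [h] at hm

theorem tendsto_atTop_of_tendsto_div (hc : 0 < c)
    (hv : Tendsto (fun m => (v m : ℝ) / m) atTop (𝓝 c)) : Tendsto v atTop atTop := by
  refine tendsto_natCast_atTop_iff.1 ((hv.pos_mul_atTop hc tendsto_natCast_atTop_atTop).congr' ?_)
  filter_upwards [eventually_gt_atTop 0] with m hm
  exact div_mul_cancel₀ _ (by positivity)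

theorem tendsto_div_of_tendsto_div {u : ℕ → ℕ} {θ : ℝ}
    (hu : Tendsto (fun m => (u m : ℝ) / v m) atTop (𝓝 θ)) (hc : 0 < c)
    (hv : Tendsto (fun m => (v m : ℝ) / m) atTop (𝓝 c)) :
    Tendsto (fun m => (u m : ℝ) / m) atTop (𝓝 (θ * c)) :=
  (hu.mul hv).congr' <| (eventually_pos_of_tendsto_div hc hv).mono fun m hm =>
    div_mul_div_cancel₀ (by positivity)

theorem tendsto_log_factorial_sub_div_of_tendsto (hc : 0 < c)
    (hv : Tendsto (fun m => (v m : ℝ) / m) atTop (𝓝 c)) :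
    Tendsto (fun m => (log (v m)! - v m * log (v m) + v m) / m) atTop (𝓝 0) := by
  have := (tendsto_log_factorial_sub_div.comp (tendsto_atTop_of_tendsto_div hc hv)).mul hv
  rw [zero_mul] at this
  refine this.congr' <| (eventually_pos_of_tendsto_div hc hv).mono fun m hm => ?_
  exact div_mul_div_cancel₀ (by positivity)

theorem mul_Hent_div {l t : ℝ} (ht : 0 < t) (htl : t < l) :
    l * Hent (t / l) = l * log l - t * log t - (l - t) * log (l - t) := by
  have hl : 0 < l := ht.trans htl
  have hcompl : 1 - t / l = (l - t) / l := by field_simp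
  rw [Hent, hcompl, log_div ht.ne' hl.ne', log_div (sub_pos.2 htl).ne' hl.ne']
  field_simp
  ring

theorem tendsto_log_choose_div {l t : ℕ → ℕ} {α θ : ℝ} (hα : 0 < α) (hθ : θ ∈ Set.Ioo 0 1)
    (hl : Tendsto (fun m => (l m : ℝ) / m) atTop (𝓝 α))
    (ht : Tendsto (fun m => (t m : ℝ) / l m) atTop (𝓝 θ)) (htl : ∀ m, t m ≤ l m) :
    Tendsto (fun m => log ((l m).choose (t m)) / m) atTop (𝓝 (α * Hent θ)) := by
  have htα : 0 < θ * α := mul_pos hθ.1 hα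
  have huα : 0 < (1 - θ) * α := mul_pos (sub_pos.2 hθ.2) hα
  have htm := tendsto_div_of_tendsto_div ht hα hl
  have hum : Tendsto (fun m => ((l m - t m : ℕ) : ℝ) / m) atTop (𝓝 ((1 - θ) * α)) := by
    have := hl.sub htm
    rw [show α - θ * α = (1 - θ) * α by ring] at this
    exact this.congr fun m => by rw [Nat.cast_sub (htl m), sub_div]
  have hlim := (hl.mul ((continuous_Hent.tendsto θ).comp ht)).add
    (((tendsto_log_factorial_sub_div_of_tendsto hα hl).sub
      (tendsto_log_factorial_sub_div_of_tendsto htα htm)).sub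
      (tendsto_log_factorial_sub_div_of_tendsto huα hum))
  rw [sub_zero, sub_zero, add_zero] at hlim
  refine hlim.congr' ?_
  filter_upwards [eventually_pos_of_tendsto_div htα htm,
    eventually_pos_of_tendsto_div huα hum] with m ht0 hu0
  have hlt : t m < l m := by omega
  have hchoose : log ((l m).choose (t m))
      = log (l m)! - log (t m)! - log (l m - t m)! := by
    rw [Nat.cast_choose ℝ (htl m), log_div (by positivity) (by positivity),
      log_mul (by positivity) (by positivity), sub_sub]
  simp only [Function.comp_apply]
  rw [div_mul_eq_mul_div, mul_Hent_div (by exact_mod_cast ht0) (by exact_mod_cast hlt),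
    hchoose, Nat.cast_sub (htl m)]
  ring

end Asymptotics

section RaoLimit

variable {ι : Type*} [Fintype ι] [DecidableEq ι] {a w : ι → ℝ} {l : ℕ → ι → ℕ} {T : ℕ → ℕ}
  {m : ℝ} (β : (n : ℕ) → Fin n → ι)

theorem eventually_lt_log_raoSum (ha : ∀ i, 0 < a i) (hw : ∀ i, 0 < w i)
    (hβ : ∀ n i, #{j | β n j = i} = l n i)
    (hla : ∀ i, Tendsto (fun n => (l n i : ℝ) / n) atTop (𝓝 (a i)))
    (hT : Tendsto (fun n => (T n : ℝ) / n) atTop (𝓝 m)) {θ : ι → ℝ}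
    (hθ : ∀ i, θ i ∈ Set.Ioo 0 1) (hθm : ∑ i, a i * θ i < m) {c : ℝ} (hc : c < growthRate a w θ) :
    ∀ᶠ n in atTop, c < 1 / n * log (raoSum (fun j => w (β n j)) (T n)) := by
  set t : ℕ → ι → ℕ := fun n i => ⌊θ i * l n i⌋₊
  have htl : ∀ n i, t n i ≤ l n i := fun n i =>
    Nat.floor_le_of_le (mul_le_of_le_one_left (Nat.cast_nonneg _) (hθ i).2.le)
  have htl_lim : ∀ i, Tendsto (fun n => (t n i : ℝ) / l n i) atTop (𝓝 (θ i)) := fun i =>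
    (tendsto_nat_floor_mul_div_atTop (hθ i).1.le).comp
      (tendsto_natCast_atTop_atTop.comp (tendsto_atTop_of_tendsto_div (ha i) (hla i)))
  have htn : ∀ i, Tendsto (fun n => (t n i : ℝ) / n) atTop (𝓝 (θ i * a i)) := fun i =>
    tendsto_div_of_tendsto_div (htl_lim i) (ha i) (hla i)
  have hsum : ∀ᶠ n in atTop, ∑ i, t n i ≤ T n := by
    have hgap := hT.sub (tendsto_finsetSum univ fun i _ => htn i)
    have hpos : 0 < m - ∑ i, θ i * a i := by simpa [mul_comm] using hθm
    filter_upwards [hgap.eventually (lt_mem_nhds hpos), eventually_gt_atTop 0] with n hn hn0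
    rw [← sum_div, sub_pos, div_lt_div_iff_of_pos_right (by positivity)] at hn
    exact_mod_cast hn.le
  have hrate : Tendsto (fun n => ∑ i, (log ((l n i).choose (t n i)) / n + t n i / n * log (w i)))
      atTop (𝓝 (growthRate a w θ)) := by
    refine tendsto_finsetSum univ fun i _ => ?_
    convert (tendsto_log_choose_div (ha i) (hθ i) (hla i) (htl_lim i) (htl · i)).add
      ((htn i).mul_const (log (w i))) using 2
    ring
  filter_upwards [hrate.eventually (lt_mem_nhds hc), hsum] with n hn hsn
  have hlog := sum_log_choose_add_le_log_raoSum (β n) hw (t := t n)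
    (by simpa [hβ n] using htl n) hsn
  simp only [hβ n] at hlog
  refine hn.trans_le (le_of_eq_of_le ?_ (mul_le_mul_of_nonneg_left hlog (by positivity)))
  rw [mul_sum]
  exact sum_congr rfl fun i _ => by ring

theorem eventually_log_raoSum_lt (hw : ∀ i, 0 ≤ w i) (hβ : ∀ n i, #{j | β n j = i} = l n i)
    (hla : ∀ i, Tendsto (fun n => (l n i : ℝ) / n) atTop (𝓝 (a i)))
    (hT : Tendsto (fun n => (T n : ℝ) / n) atTop (𝓝 m)) {lam : ℝ} (hlam : lam ≤ 0) {c : ℝ}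
    (hc : ∑ i, a i * log (1 + w i * exp lam) - lam * m < c) :
    ∀ᶠ n in atTop, 1 / n * log (raoSum (fun j => w (β n j)) (T n)) < c := by
  have hlim : Tendsto (fun n => ∑ i, l n i / n * log (1 + w i * exp lam) - lam * (T n / n))
      atTop (𝓝 (∑ i, a i * log (1 + w i * exp lam) - lam * m)) :=
    (tendsto_finsetSum univ fun i _ => (hla i).mul_const _).sub (hT.const_mul lam)
  filter_upwards [hlim.eventually (gt_mem_nhds hc)] with n hn
  have hlog := log_raoSum_le (β n) hw hlam (T n)
  simp only [hβ n] at hlog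
  refine lt_of_le_of_lt (le_of_le_of_eq (mul_le_mul_of_nonneg_left hlog (by positivity)) ?_) hn
  rw [mul_add, mul_sum, sub_eq_neg_add]
  congr 1
  · ring
  · exact sum_congr rfl fun i _ => by ring

end RaoLimit

end RaoBound

open RaoBound in
theorem rao_bound_large_deviations_limit_general
    (σ : ℕ) (s : Fin σ → ℕ) (hs : ∀ i, 2 ≤ s i)
    (a : Fin σ → ℝ) (ha : ∀ i, 0 < a i) (hsuma : ∑ i, a i = 1)
    (μ : ℝ) (hμ : μ ∈ Set.Ioo (0 : ℝ) 1)
    (l : ℕ → Fin σ → ℕ) (hl : ∀ n, ∑ i, l n i = n)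
    (hla : ∀ i, Filter.Tendsto (fun n => (l n i : ℝ) / n) Filter.atTop (nhds (a i)))
    (b : ℕ → ℕ → Fin σ)
    (hb : ∀ n, ∀ j < n, ∀ i : Fin σ, b n j = i ↔
      (∑ k ∈ univ.filter (fun k => k < i), l n k) ≤ j ∧
        j < (∑ k ∈ univ.filter (fun k => k < i), l n k) + l n i)
    (T : ℕ → ℕ)
    (hT : Filter.Tendsto (fun n => (T n : ℝ) / n) Filter.atTop (nhds (μ / 2))) :
    Filter.Tendsto (fun n : ℕ => (1 / (n : ℝ)) * Real.log
        (∑ x ∈ univ.filter (fun x : Fin n → Bool =>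
            (∑ j, if x j then 1 else 0) ≤ T n),
          ∏ j : Fin n, (if x j then (s (b n j.val) : ℝ) - 1 else 1)))
      Filter.atTop
      (nhds (sSup {v : ℝ | ∃ θ : Fin σ → ℝ,
        (∀ i, θ i ∈ Set.Ioo (0 : ℝ) 1) ∧ (∑ i, a i * θ i) = μ / 2 ∧
        v = ∑ i, a i * (θ i * Real.log ((s i : ℝ) - 1) + Hent (θ i))})) := by
  set w : Fin σ → ℝ := fun i => (s i : ℝ) - 1
  have hw : ∀ i, 1 ≤ w i := fun i => by
    have : (2 : ℝ) ≤ s i := by exact_mod_cast hs i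
    linarith
  have hw0 : ∀ i, 0 < w i := fun i => one_pos.trans_le (hw i)
  have hβ : ∀ n i, #{j : Fin n | b n j = i} = l n i := fun n =>
    card_filter_eq_of_block (hl n) fun j => hb n j j.isLt
  obtain ⟨lam, hlam, hm⟩ := exists_nonpos_sum_mul_tilt_eq (m := μ / 2) (fun i => (ha i).le) hsuma hw
    (by linarith [hμ.1]) (by linarith [hμ.2])
  rw [(isGreatest_growthRate (fun i => (ha i).le) hw0 hm).csSup_eq]
  refine tendsto_order.2 ⟨fun c hc => ?_, fun c hc => ?_⟩
  · -- the lower bound needs strict feasibility, so shrink the optimal profile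
    obtain ⟨δ, hδ, hcδ⟩ := exists_scale_lt_growthRate hc
    refine eventually_lt_log_raoSum (fun n j => b n j) ha hw0 hβ hla hT
      (fun i => ?_) ?_ hcδ
    · have := tilt_mem_Ioo (hw0 i) lam
      exact ⟨mul_pos hδ.1 this.1, mul_lt_one_of_nonneg_of_lt_one_left hδ.1.le hδ.2 this.2.le⟩
    · simp only [Pi.smul_apply, smul_eq_mul, mul_left_comm (a _), ← mul_sum, hm]
      nlinarith [hμ.1, hδ.2]
  · rw [growthRate_tilt hw0, hm] at hc
    exact eventually_log_raoSum_lt (fun n j => b n j) (fun i => (hw0 i).le) hβ hla hT hlam hc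

/-- large deviations limit of the Rao bound (main convergence
theorem, Theorem `t:convergence` of the paper). -/
theorem rao_bound_large_deviations_limit
    (σ : ℕ) (hσ : 1 ≤ σ) (s : Fin σ → ℕ) (hs : ∀ i, 2 ≤ s i)
    (a : Fin σ → ℝ) (ha : ∀ i, 0 < a i) (hsuma : ∑ i, a i = 1)
    (μ : ℝ) (hμ : μ ∈ Set.Ioo (0 : ℝ) 1)
    (l : ℕ → Fin σ → ℕ) (hl : ∀ n, ∑ i, l n i = n)
    (hla : ∀ i, Filter.Tendsto (fun n => (l n i : ℝ) / n) Filter.atTop (nhds (a i)))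
    (b : ℕ → ℕ → Fin σ)
    (hb : ∀ n, ∀ j < n, ∀ i : Fin σ, b n j = i ↔
      (∑ k ∈ univ.filter (fun k => k < i), l n k) ≤ j ∧
        j < (∑ k ∈ univ.filter (fun k => k < i), l n k) + l n i)
    (T : ℕ → ℕ)
    (hT : Filter.Tendsto (fun n => (T n : ℝ) / n) Filter.atTop (nhds (μ / 2))) :
    Filter.Tendsto (fun n : ℕ => (1 / (n : ℝ)) * Real.log
        (∑ x ∈ univ.filter (fun x : Fin n → Bool =>
            (∑ j, if x j then 1 else 0) ≤ T n),
          ∏ j : Fin n, (if x j then (s (b n j.val) : ℝ) - 1 else 1)))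
      Filter.atTop
      (nhds (sSup {v : ℝ | ∃ θ : Fin σ → ℝ,
        (∀ i, θ i ∈ Set.Ioo (0 : ℝ) 1) ∧ (∑ i, a i * θ i) = μ / 2 ∧
        v = ∑ i, a i * (θ i * Real.log ((s i : ℝ) - 1) + Hent (θ i))})) :=
  rao_bound_large_deviations_limit_general σ s hs a ha hsuma μ hμ l hl hla b hb T hT
end

section
/- Asymptotic optimality of the fixed importance-sampling change of measure: let s_1,…,s_σ ≥ 2 be integers, a_1,…,a_σ > 0 with ∑ a_i = 1, μ ∈ (0,1), let λ* be the unique real solution of ∑_{i=1}^σ a_i (s_i − 1)/(e^λ + s_i − 1) = μ/2, and θ_i* = (s_i − 1)/(e^{λ*} + s_i − 1). For each n let l_1^{(n)},…,l_σ^{(n)} ∈ ℕ with ∑_i l_i^{(n)} = n and l_i^{(n)}/n → a_i, let b_n, r_n be the corresponding block and cost functions, T_n ∈ ℕ with T_n/n → μ/2, and set sampling weights q_n(1,j) = θ*_{b_n(j)}, q_n(0,j) = 1 − θ*_{b_n(j)}. Then the second moment Σ_n = ∑_{x ∈ {0,1}^n with S(x) ≤ T_n} ∏_{j=1}^n r_n(x_j,j)²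 / q_n(x_j,j) satisfies limsup_{n→∞} (1/n) log Σ_n ≤ 2 V₀, where V₀ = sup { ∑_{i=1}^σ a_i ( θ_i log(s_i − 1) + H(θ_i) ) : θ ∈ (0,1)^σ, ∑ a_i θ_i = μ/2 }. -/
/-!
Since `μ / 2 < 1 / 2` forces `λ* ≥ 0`, every term of `Σ_n` with `S(x) ≤ T_n` may be multiplied
by `exp (2λ* (T_n - S(x))) ≥ 1`, after which the constraint is dropped and the sum factorises over
the positions. With `c = s - 1` and `θ* = c / (e^{λ*} + c)` each factor equals
`(1 + c e^{-λ*})²`, so `log Σ_n ≤ 2 (λ* T_n + ∑ᵢ lᵢ log (1 + cᵢ e^{-λ*}))`. Divided by `n` this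
tends to `2 (λ* μ/2 + ∑ᵢ aᵢ log (1 + cᵢ e^{-λ*}))`, which is twice the objective of `V₀` at the
feasible point `θ*`.
-/

open Finset

open Real Filter Topology

theorem Hent_le_log_two (θ : ℝ) : Hent θ ≤ log 2 := by
  convert binEntropy_le_log_two (p := θ) using 1
  simp only [Hent, binEntropy, log_inv]
  ring

theorem sum_mul_add_Hent_le {ι : Type*} [Fintype ι] (a c θ : ι → ℝ) (ha : ∀ i, 0 ≤ a i)
    (hθ : ∀ i, θ i ∈ Set.Icc (0 : ℝ) 1) :
    ∑ i, a i * (θ i * log (c i) + Hent (θ i)) ≤ ∑ i, a i * (|log (c i)| + log 2) := by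
  gcongr with i
  · exact ha i
  · calc θ i * log (c i) ≤ |θ i * log (c i)| := le_abs_self _
      _ = θ i * |log (c i)| := by rw [abs_mul, abs_of_nonneg (hθ i).1]
      _ ≤ |log (c i)| := mul_le_of_le_one_left (abs_nonneg _) (hθ i).2
  · exact Hent_le_log_two _

theorem div_exp_add_mem_Ioo {c : ℝ} (hc : 0 < c) (t : ℝ) : c / (exp t + c) ∈ Set.Ioo 0 1 :=
  ⟨by positivity, (div_lt_one (by positivity)).2 (by linarith [exp_pos t])⟩

theorem mul_log_add_Hent_div_exp_add {c : ℝ} (hc : 0 < c) (t : ℝ) :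
    c / (exp t + c) * log c + Hent (c / (exp t + c))
      = log (1 + c * exp (-t)) + t * (c / (exp t + c)) := by
  have hE := exp_pos t
  have hC : 0 < exp t + c := by positivity
  have hsub : 1 - c / (exp t + c) = exp t / (exp t + c) := by field_simp; ring
  have hlog : log (1 + c * exp (-t)) = log (exp t + c) - t := by
    have : 1 + c * exp (-t) = (exp t + c) / exp t := by rw [exp_neg]; field_simp
    rw [this, log_div hC.ne' hE.ne', log_exp]
  rw [Hent, hsub, hlog, log_div hc.ne' hC.ne', log_div hE.ne' hC.ne', log_exp]
  field_simp
  ring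

theorem nonneg_of_sum_mul_div_exp_add_lt_half {ι : Type*} [Fintype ι] (a c : ι → ℝ)
    (ha : ∀ i, 0 ≤ a i) (hsuma : ∑ i, a i = 1) (hc : ∀ i, 1 ≤ c i) {t : ℝ}
    (ht : ∑ i, a i * (c i / (exp t + c i)) < 1 / 2) : 0 ≤ t := by
  by_contra! hneg
  have half_le : ∀ i, 1 / 2 ≤ c i / (exp t + c i) := fun i => by
    have hE : exp t < 1 := exp_lt_one_iff.2 hneg
    rw [le_div_iff₀ (by linarith [exp_pos t, hc i])]
    linarith [hc i]
  have : 1 / 2 ≤ ∑ i, a i * (c i / (exp t + c i)) :=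
    calc (1 / 2 : ℝ) = ∑ i, a i * (1 / 2) := by rw [← sum_mul, hsuma, one_mul]
      _ ≤ _ := sum_le_sum fun i _ => mul_le_mul_of_nonneg_left (half_le i) (ha i)
  linarith

/-- The factor `r(y, j)² / q(y, j)` of the second moment at a position with `s - 1 = c` and
sampling probability `θ`. -/
noncomputable def secondMomentFactor (c θ : ℝ) (y : Bool) : ℝ :=
  (if y then c else 1) ^ 2 / (if y then θ else 1 - θ)

theorem secondMomentFactor_false (c θ : ℝ) : secondMomentFactor c θ false = 1 / (1 - θ) := by
  simp [secondMomentFactor]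

theorem secondMomentFactor_true (c θ : ℝ) : secondMomentFactor c θ true = c ^ 2 / θ := by
  simp [secondMomentFactor]

theorem secondMomentFactor_nonneg {c θ : ℝ} (hθ : θ ∈ Set.Icc (0 : ℝ) 1) (y : Bool) :
    0 ≤ secondMomentFactor c θ y := by
  cases y
  · rw [secondMomentFactor_false]
    exact div_nonneg zero_le_one (sub_nonneg.2 hθ.2)
  · rw [secondMomentFactor_true]
    exact div_nonneg (sq_nonneg c) hθ.1

theorem one_le_secondMomentFactor_false (c : ℝ) {θ : ℝ} (hθ : θ ∈ Set.Ico (0 : ℝ) 1) :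
    1 ≤ secondMomentFactor c θ false := by
  rw [secondMomentFactor_false]
  exact one_le_one_div (sub_pos.2 hθ.2) (sub_le_self _ hθ.1)

theorem secondMomentFactor_false_add_exp_mul_true {c : ℝ} (hc : 0 < c) (t : ℝ) :
    secondMomentFactor c (c / (exp t + c)) false
        + exp (-(2 * t)) * secondMomentFactor c (c / (exp t + c)) true
      = (1 + c * exp (-t)) ^ 2 := by
  have hE := exp_pos t
  have h2 : exp (-(2 * t)) = exp (-t) ^ 2 := by rw [← exp_nat_mul]; ring_nf
  rw [secondMomentFactor_false, secondMomentFactor_true, h2, exp_neg]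
  field_simp
  ring

theorem one_le_sum_filter_count_prod {ι : Type*} [Fintype ι] [DecidableEq ι]
    (f : ι → Bool → ℝ) (hf : ∀ j y, 0 ≤ f j y) (hf₁ : ∀ j, 1 ≤ f j false) (T : ℕ) :
    1 ≤ ∑ x ∈ univ.filter (fun x : ι → Bool => (∑ j, if x j then 1 else 0) ≤ T),
      ∏ j, f j (x j) :=
  calc (1 : ℝ) ≤ ∏ j, f j false := one_le_prod fun j _ => hf₁ j
    _ ≤ _ := single_le_sum (f := fun x : ι → Bool => ∏ j, f j (x j))
        (fun x _ => prod_nonneg fun j _ => hf j _) (by simp)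

theorem sum_filter_count_le_exp_mul_prod {ι : Type*} [Fintype ι] [DecidableEq ι]
    (f : ι → Bool → ℝ) (hf : ∀ j y, 0 ≤ f j y) {t : ℝ} (ht : 0 ≤ t) (T : ℕ) :
    ∑ x ∈ univ.filter (fun x : ι → Bool => (∑ j, if x j then 1 else 0) ≤ T), ∏ j, f j (x j)
      ≤ exp (t * T) * ∏ j, (f j false + exp (-t) * f j true) := by
  let w : ι → Bool → ℝ := fun j y => exp (-t * if y then 1 else 0) * f j y
  have hw : ∀ j y, 0 ≤ w j y := fun j y => mul_nonneg (exp_nonneg _) (hf j y)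
  have tilt : ∀ x ∈ univ.filter (fun x : ι → Bool => (∑ j, if x j then 1 else 0) ≤ T),
      ∏ j, f j (x j) ≤ exp (t * T) * ∏ j, w j (x j) := by
    intro x hx
    have hcount : ((∑ j, if x j then 1 else 0 : ℕ) : ℝ) ≤ T := by
      exact_mod_cast (mem_filter.1 hx).2
    have hprod : ∏ j, w j (x j)
        = exp (-t * ((∑ j, if x j then 1 else 0 : ℕ) : ℝ)) * ∏ j, f j (x j) := by
      simp only [w, prod_mul_distrib, ← exp_sum, ← mul_sum]
      push_cast
      rfl
    rw [hprod, ← mul_assoc, ← exp_add]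
    exact le_mul_of_one_le_left (prod_nonneg fun j _ => hf j _) (one_le_exp (by nlinarith))
  calc _ ≤ ∑ x ∈ univ.filter (fun x : ι → Bool => (∑ j, if x j then 1 else 0) ≤ T),
        exp (t * T) * ∏ j, w j (x j) := sum_le_sum tilt
    _ ≤ ∑ x : ι → Bool, exp (t * T) * ∏ j, w j (x j) :=
        sum_le_sum_of_subset_of_nonneg (filter_subset _ _)
          fun x _ _ => mul_nonneg (exp_nonneg _) (prod_nonneg fun j _ => hw j _)
    _ = exp (t * T) * ∏ j, ∑ y, w j y := by rw [← mul_sum, Fintype.prod_sum]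
    _ = _ := by simp [w, add_comm]

theorem sum_comp_block_eq_sum_nsmul {σ n : ℕ} {M : Type*} [AddCommMonoid M] (l : Fin σ → ℕ)
    (hl : ∑ i, l i = n) (b : ℕ → Fin σ)
    (hb : ∀ j < n, ∀ i : Fin σ, b j = i ↔
      (∑ k ∈ univ.filter (fun k => k < i), l k) ≤ j ∧
        j < (∑ k ∈ univ.filter (fun k => k < i), l k) + l i)
    (F : Fin σ → M) :
    ∑ j : Fin n, F (b j) = ∑ i, l i • F i := by
  rw [Fin.sum_univ_eq_sum_range (fun j => F (b j)),
    ← sum_fiberwise_of_maps_to (g := b) (t := univ) fun j _ => mem_univ _]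
  refine sum_congr rfl fun i _ => ?_
  set start := ∑ k ∈ univ.filter (fun k => k < i), l k
  have hend : start + l i ≤ n := by
    rw [← hl, add_comm, ← sum_insert (f := l) (s := univ.filter (fun k => k < i)) (by simp)]
    exact sum_le_sum_of_subset (subset_univ _)
  have hfiber : (range n).filter (fun j => b j = i) = Ico start (start + l i) := by
    ext j
    simp only [mem_filter, mem_range, mem_Ico]
    exact ⟨fun ⟨hj, hbj⟩ => (hb j hj i).1 hbj,
      fun hj => ⟨hj.2.trans_le hend, (hb j (hj.2.trans_le hend) i).2 hj⟩⟩
  rw [sum_congr rfl fun j hj => by rw [(mem_filter.1 hj).2], sum_const, hfiber, Nat.card_Ico,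
    Nat.add_sub_cancel_left]

theorem log_sum_filter_count_prod_secondMomentFactor_le {σ n : ℕ} (l : Fin σ → ℕ)
    (hl : ∑ i, l i = n) (b : ℕ → Fin σ)
    (hb : ∀ j < n, ∀ i : Fin σ, b j = i ↔
      (∑ k ∈ univ.filter (fun k => k < i), l k) ≤ j ∧
        j < (∑ k ∈ univ.filter (fun k => k < i), l k) + l i)
    {c θ : Fin σ → ℝ} (hc : ∀ i, 0 < c i) {t : ℝ} (ht : 0 ≤ t)
    (hθ : ∀ i, θ i = c i / (exp t + c i)) (T : ℕ) :
    log (∑ x ∈ univ.filter (fun x : Fin n → Bool => (∑ j, if x j then 1 else 0) ≤ T),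
        ∏ j : Fin n, secondMomentFactor (c (b j)) (θ (b j)) (x j))
      ≤ 2 * (t * T + ∑ i, l i * log (1 + c i * exp (-t))) := by
  set f : Fin n → Bool → ℝ := fun j => secondMomentFactor (c (b j)) (θ (b j))
  have hθ01 : ∀ i, θ i ∈ Set.Ioo (0 : ℝ) 1 := fun i => hθ i ▸ div_exp_add_mem_Ioo (hc i) t
  have hf : ∀ j y, 0 ≤ f j y := fun j =>
    secondMomentFactor_nonneg (Set.Ioo_subset_Icc_self (hθ01 _))
  have hpos := one_pos.trans_le <| one_le_sum_filter_count_prod f hf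
    (fun j => one_le_secondMomentFactor_false _ (Set.Ioo_subset_Ico_self (hθ01 _))) T
  have hfactor : ∀ j, f j false + exp (-(2 * t)) * f j true = (1 + c (b j) * exp (-t)) ^ 2 :=
    fun j => by simp only [f, hθ]; exact secondMomentFactor_false_add_exp_mul_true (hc _) t
  have hbase : ∀ i, 0 < 1 + c i * exp (-t) := fun i => by have := hc i; positivity
  calc _ ≤ log (exp (2 * t * T) * ∏ j, (f j false + exp (-(2 * t)) * f j true)) :=
        log_le_log hpos (sum_filter_count_le_exp_mul_prod f hf (by positivity) T)
    _ = 2 * t * T + ∑ j : Fin n, 2 * log (1 + c (b j) * exp (-t)) := by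
        simp only [hfactor]
        rw [log_mul (exp_ne_zero _) (prod_pos fun j _ => pow_pos (hbase _) 2).ne', log_exp,
          log_prod fun j _ => (pow_pos (hbase _) 2).ne']
        simp only [log_pow, Nat.cast_ofNat]
    _ = 2 * (t * T + ∑ i, l i * log (1 + c i * exp (-t))) := by
        rw [sum_comp_block_eq_sum_nsmul l hl b hb (fun i => 2 * log (1 + c i * exp (-t))), mul_add,
          mul_sum, mul_assoc]
        simp only [nsmul_eq_mul, mul_left_comm]

theorem tendsto_mul_add_sum_mul_div {ι : Type*} [Fintype ι] {T : ℕ → ℝ} {l : ℕ → ι → ℝ}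
    {τ : ℝ} {a : ι → ℝ} (hT : Tendsto (fun n => T n / n) atTop (𝓝 τ))
    (hl : ∀ i, Tendsto (fun n => l n i / n) atTop (𝓝 (a i))) (t : ℝ) (F : ι → ℝ) :
    Tendsto (fun n => (t * T n + ∑ i, l n i * F i) / n) atTop (𝓝 (t * τ + ∑ i, a i * F i)) := by
  have hsplit : (fun n : ℕ => (t * T n + ∑ i, l n i * F i) / n)
      = fun n => t * (T n / n) + ∑ i, l n i / n * F i := by
    funext n
    simp only [add_div, sum_div, mul_div_assoc, div_mul_eq_mul_div]
  rw [hsplit]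
  exact (hT.const_mul t).add (tendsto_finsetSum _ fun i _ => (hl i).mul_const (F i))

theorem limsup_one_div_mul_log_le {S u : ℕ → ℝ} (h₁ : ∀ n, 1 ≤ S n)
    (hu : ∀ n, log (S n) ≤ u n) {L : ℝ} (hL : Tendsto (fun n => u n / n) atTop (𝓝 L)) :
    limsup (fun n : ℕ => 1 / (n : ℝ) * log (S n)) atTop ≤ L := by
  have hle : ∀ n : ℕ, 1 / (n : ℝ) * log (S n) ≤ u n / n := fun n => by
    rw [one_div_mul_eq_div]
    exact div_le_div_of_nonneg_right (hu n) n.cast_nonneg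
  calc limsup (fun n : ℕ => 1 / (n : ℝ) * log (S n)) atTop ≤ limsup (fun n => u n / n) atTop :=
        limsup_le_limsup (Eventually.of_forall hle)
          (isCoboundedUnder_le_of_le atTop fun n => mul_nonneg (by positivity) (log_nonneg (h₁ n)))
          hL.isBoundedUnder_le
    _ = L := hL.limsup_eq

theorem importance_sampling_asymptotically_optimal_general
    (σ : ℕ) (s : Fin σ → ℕ) (hs : ∀ i, 2 ≤ s i)
    (a : Fin σ → ℝ) (ha : ∀ i, 0 < a i) (hsuma : ∑ i, a i = 1)
    (μ : ℝ) (hμ : μ ∈ Set.Ioo (0 : ℝ) 1)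
    (lamStar : ℝ)
    (hlam : ∑ i, a i * ((s i : ℝ) - 1) / (Real.exp lamStar + (s i : ℝ) - 1) = μ / 2)
    (θstar : Fin σ → ℝ)
    (hθ : ∀ i, θstar i = ((s i : ℝ) - 1) / (Real.exp lamStar + (s i : ℝ) - 1))
    (l : ℕ → Fin σ → ℕ) (hl : ∀ n, ∑ i, l n i = n)
    (hla : ∀ i, Filter.Tendsto (fun n => (l n i : ℝ) / n) Filter.atTop (nhds (a i)))
    (b : ℕ → ℕ → Fin σ)
    (hb : ∀ n, ∀ j < n, ∀ i : Fin σ, b n j = i ↔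
      (∑ k ∈ univ.filter (fun k => k < i), l n k) ≤ j ∧
        j < (∑ k ∈ univ.filter (fun k => k < i), l n k) + l n i)
    (T : ℕ → ℕ)
    (hT : Filter.Tendsto (fun n => (T n : ℝ) / n) Filter.atTop (nhds (μ / 2))) :
    Filter.limsup (fun n : ℕ => (1 / (n : ℝ)) * Real.log
        (∑ x ∈ univ.filter (fun x : Fin n → Bool =>
            (∑ j, if x j then 1 else 0) ≤ T n),
          ∏ j : Fin n,
            ((if x j then (s (b n j.val) : ℝ) - 1 else 1) ^ 2
              / (if x j then θstar (b n j.val) else 1 - θstar (b n j.val)))))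
      Filter.atTop
      ≤ 2 * sSup {v : ℝ | ∃ θ : Fin σ → ℝ,
          (∀ i, θ i ∈ Set.Ioo (0 : ℝ) 1) ∧ (∑ i, a i * θ i) = μ / 2 ∧
          v = ∑ i, a i * (θ i * Real.log ((s i : ℝ) - 1) + Hent (θ i))} := by
  set c : Fin σ → ℝ := fun i => (s i : ℝ) - 1
  have hc : ∀ i, 1 ≤ c i := fun i => by
    have : (2 : ℝ) ≤ s i := by exact_mod_cast hs i
    simp only [c]; linarith
  have hc₀ : ∀ i, 0 < c i := fun i => one_pos.trans_le (hc i)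
  have hθc : ∀ i, θstar i = c i / (exp lamStar + c i) := fun i => by rw [hθ, add_sub_assoc]
  have hθ01 : ∀ i, θstar i ∈ Set.Ioo (0 : ℝ) 1 := fun i => hθc i ▸ div_exp_add_mem_Ioo (hc₀ i) _
  have hsumθ : ∑ i, a i * θstar i = μ / 2 := by simp only [← hlam, hθ, mul_div_assoc]
  have hlam₀ : 0 ≤ lamStar := nonneg_of_sum_mul_div_exp_add_lt_half a c (fun i => (ha i).le)
    hsuma hc (by simp only [← hθc, hsumθ]; linarith [hμ.2])
  set F : Fin σ → ℝ := fun i => log (1 + c i * exp (-lamStar))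
  have hvalue : ∑ i, a i * (θstar i * log (c i) + Hent (θstar i))
      = lamStar * (μ / 2) + ∑ i, a i * F i := by
    simp only [hθc, mul_log_add_Hent_div_exp_add (hc₀ _), ← hsumθ, mul_sum]
    rw [← sum_add_distrib]
    exact sum_congr rfl fun i _ => by ring
  refine (limsup_one_div_mul_log_le
    (fun n => one_le_sum_filter_count_prod _
      (fun j => secondMomentFactor_nonneg (Set.Ioo_subset_Icc_self (hθ01 _)))
      (fun j => one_le_secondMomentFactor_false _ (Set.Ioo_subset_Ico_self (hθ01 _))) (T n))
    (fun n => log_sum_filter_count_prod_secondMomentFactor_le (l n) (hl n) (b n) (hb n) hc₀ hlam₀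
      hθc (T n))
    (by simpa only [mul_div_assoc] using
      (tendsto_mul_add_sum_mul_div hT hla lamStar F).const_mul 2)).trans ?_
  rw [← hvalue]
  gcongr
  refine le_csSup ⟨∑ i, a i * (|log (c i)| + log 2), ?_⟩ ⟨θstar, hθ01, hsumθ, rfl⟩
  rintro v ⟨θ, hθ', -, rfl⟩
  exact sum_mul_add_Hent_le a c θ (fun i => (ha i).le) fun i => Set.Ioo_subset_Icc_self (hθ' i)

/-- asymptotic optimality of the fixed importance-sampling
change of measure built from the Lagrange multiplier `λ*`: the second moment
of the IS estimator grows at exponential rate at most `2V₀`. -/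
theorem importance_sampling_asymptotically_optimal
    (σ : ℕ) (hσ : 1 ≤ σ) (s : Fin σ → ℕ) (hs : ∀ i, 2 ≤ s i)
    (a : Fin σ → ℝ) (ha : ∀ i, 0 < a i) (hsuma : ∑ i, a i = 1)
    (μ : ℝ) (hμ : μ ∈ Set.Ioo (0 : ℝ) 1)
    (lamStar : ℝ)
    (hlam : ∑ i, a i * ((s i : ℝ) - 1) / (Real.exp lamStar + (s i : ℝ) - 1) = μ / 2)
    (θstar : Fin σ → ℝ)
    (hθ : ∀ i, θstar i = ((s i : ℝ) - 1) / (Real.exp lamStar + (s i : ℝ) - 1))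
    (l : ℕ → Fin σ → ℕ) (hl : ∀ n, ∑ i, l n i = n)
    (hla : ∀ i, Filter.Tendsto (fun n => (l n i : ℝ) / n) Filter.atTop (nhds (a i)))
    (b : ℕ → ℕ → Fin σ)
    (hb : ∀ n, ∀ j < n, ∀ i : Fin σ, b n j = i ↔
      (∑ k ∈ univ.filter (fun k => k < i), l n k) ≤ j ∧
        j < (∑ k ∈ univ.filter (fun k => k < i), l n k) + l n i)
    (T : ℕ → ℕ)
    (hT : Filter.Tendsto (fun n => (T n : ℝ) / n) Filter.atTop (nhds (μ / 2))) :
    Filter.limsup (fun n : ℕ => (1 / (n : ℝ)) * Real.log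
        (∑ x ∈ univ.filter (fun x : Fin n → Bool =>
            (∑ j, if x j then 1 else 0) ≤ T n),
          ∏ j : Fin n,
            ((if x j then (s (b n j.val) : ℝ) - 1 else 1) ^ 2
              / (if x j then θstar (b n j.val) else 1 - θstar (b n j.val)))))
      Filter.atTop
      ≤ 2 * sSup {v : ℝ | ∃ θ : Fin σ → ℝ,
          (∀ i, θ i ∈ Set.Ioo (0 : ℝ) 1) ∧ (∑ i, a i * θ i) = μ / 2 ∧
          v = ∑ i, a i * (θ i * Real.log ((s i : ℝ) - 1) + Hent (θ i))} :=
  importance_sampling_asymptotically_optimal_general σ s hs a ha hsuma μ hμ lamStar hlam θstar hθ l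
    hl hla b hb T hT
end
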